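/- Let n ≥ 1 and let Φ ⊆ C_n = {±e_i ± e_j : i ≠ j} ∪ {±2e_i : 1 ≤ i ≤ n} be a root subsystem. Then there exist a sign function ε : {1,…,n} → {1,−1}, a partition P of {1,…,n}, and a type assignment t from P to {A, D, C}, such that D_ε(Φ) = ⋃_{B∈P} Φ_{t(B)}(B), where D_ε is the linear automorphism of ℝ^n with D_ε(e_i) = ε(i)·e_i. -/
import Mathlib


open Finset

noncomputable section

/-- Standard basis vector `e i` of `ℝ^n`. -/
def E {n : ℕ} (i : Fin n) : Fin n → ℝ := Pi.single i 1

/-- Standard inner product on `ℝ^n`. -/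
def dot {n : ℕ} (v w : Fin n → ℝ) : ℝ := ∑ i, v i * w i

/-- Reflection across the hyperplane orthogonal to `α`. -/
def reflRoot {n : ℕ} (α v : Fin n → ℝ) : Fin n → ℝ := v - (2 * dot v α / dot α α) • α

/-- The root system `A_{n-1}`. -/
def Aset (n : ℕ) : Set (Fin n → ℝ) := {α | ∃ i j : Fin n, i ≠ j ∧ α = E i - E j}

/-- The root system `D_n`. -/
def Dset (n : ℕ) : Set (Fin n → ℝ) :=
  {α | ∃ i j : Fin n, i ≠ j ∧ (α = E i - E j ∨ α = E i + E j ∨ α = -(E i + E j))}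

/-- The root system `B_n`. -/
def Bset (n : ℕ) : Set (Fin n → ℝ) := Dset n ∪ {α | ∃ i : Fin n, α = E i ∨ α = -E i}

/-- The root system `C_n`. -/
def Cset (n : ℕ) : Set (Fin n → ℝ) :=
  Dset n ∪ {α | ∃ i : Fin n, α = (2:ℝ) • E i ∨ α = -((2:ℝ) • E i)}

/-- The nonreduced root system `BC_n`. -/
def BCset (n : ℕ) : Set (Fin n → ℝ) := Bset n ∪ Cset n

/-- Types of classical irreducible root (sub)systems. -/
inductive RType | A | D | B | C | BC
deriving DecidableEq

/-- Type-`A` system on a block `B`. -/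
def PhiA {n : ℕ} (B : Finset (Fin n)) : Set (Fin n → ℝ) :=
  {α | ∃ i ∈ B, ∃ j ∈ B, i ≠ j ∧ α = E i - E j}

/-- Type-`D` system on a block `B`. -/
def PhiD {n : ℕ} (B : Finset (Fin n)) : Set (Fin n → ℝ) :=
  {α | ∃ i ∈ B, ∃ j ∈ B, i ≠ j ∧ (α = E i - E j ∨ α = E i + E j ∨ α = -(E i + E j))}

/-- Type-`B` system on a block `B`. -/
def PhiB {n : ℕ} (B : Finset (Fin n)) : Set (Fin n → ℝ) :=
  PhiD B ∪ {α | ∃ i ∈ B, α = E i ∨ α = -E i}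

/-- Type-`C` system on a block `B`. -/
def PhiC {n : ℕ} (B : Finset (Fin n)) : Set (Fin n → ℝ) :=
  PhiD B ∪ {α | ∃ i ∈ B, α = (2:ℝ) • E i ∨ α = -((2:ℝ) • E i)}

/-- Type-`BC` system on a block `B`. -/
def PhiBC {n : ℕ} (B : Finset (Fin n)) : Set (Fin n → ℝ) := PhiB B ∪ PhiC B

/-- The classical system of the given type on a block. -/
def PhiOf {n : ℕ} : RType → Finset (Fin n) → Set (Fin n → ℝ)
  | RType.A => PhiA
  | RType.D => PhiD
  | RType.B => PhiB
  | RType.C => PhiC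
  | RType.BC => PhiBC

namespace S12
set_option linter.unusedSectionVars false
variable {n : ℕ}

@[simp] lemma dot_add_left (u v w : Fin n → ℝ) : dot (u+v) w = dot u w + dot v w := by
  simp [dot, add_mul, Finset.sum_add_distrib]
@[simp] lemma dot_sub_left (u v w : Fin n → ℝ) : dot (u-v) w = dot u w - dot v w := by
  simp [dot, sub_mul, Finset.sum_sub_distrib]
@[simp] lemma dot_neg_left (u w : Fin n → ℝ) : dot (-u) w = - dot u w := by
  simp [dot, Finset.sum_neg_distrib]
@[simp] lemma dot_smul_left (c : ℝ) (u w : Fin n → ℝ) : dot (c • u) w = c * dot u w := by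
  simp [dot, Finset.mul_sum, mul_assoc]
@[simp] lemma dot_add_right (u v w : Fin n → ℝ) : dot u (v+w) = dot u v + dot u w := by
  simp [dot, mul_add, Finset.sum_add_distrib]
@[simp] lemma dot_sub_right (u v w : Fin n → ℝ) : dot u (v-w) = dot u v - dot u w := by
  simp [dot, mul_sub, Finset.sum_sub_distrib]
@[simp] lemma dot_neg_right (u w : Fin n → ℝ) : dot u (-w) = - dot u w := by
  simp [dot]
@[simp] lemma dot_smul_right (c : ℝ) (u w : Fin n → ℝ) : dot u (c • w) = c * dot u w := by
  simp only [dot, Pi.smul_apply, smul_eq_mul, Finset.mul_sum]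
  exact Finset.sum_congr rfl fun i _ => by ring
@[simp] lemma dot_E_E (i j : Fin n) : dot (E i) (E j) = if i = j then 1 else 0 := by
  simp only [dot, E, Pi.single_apply]
  rw [Finset.sum_eq_single i]
  · simp [eq_comm]
  · intro b _ hb; simp [hb]
  · simp

section Main
variable (Φ : Set (Fin n → ℝ))

lemma refl_mem2 (hcl : ∀ α ∈ Φ, ∀ β ∈ Φ, reflRoot α β ∈ Φ) {α v γ : Fin n → ℝ}
    (hα : α ∈ Φ) (hv : v ∈ Φ) (c : ℝ) (h2 : dot α α = 2) (hc : dot v α = c)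
    (hγ : γ = v - c • α) : γ ∈ Φ := by
  have h := hcl α hα v hv
  rwa [reflRoot, h2, hc, show 2*c/2 = c by ring, ← hγ] at h

lemma refl_mem4 (hcl : ∀ α ∈ Φ, ∀ β ∈ Φ, reflRoot α β ∈ Φ) {α v γ : Fin n → ℝ}
    (hα : α ∈ Φ) (hv : v ∈ Φ) (c : ℝ) (h4 : dot α α = 4) (hc : dot v α = c)
    (hγ : γ = v - (c/2) • α) : γ ∈ Φ := by
  have h := hcl α hα v hv
  rwa [reflRoot, h4, hc, show 2*c/4 = c/2 by ring, ← hγ] at h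

lemma neg_mem (hsub : Φ ⊆ Cset n) (hcl : ∀ α ∈ Φ, ∀ β ∈ Φ, reflRoot α β ∈ Φ)
    {α : Fin n → ℝ} (hα : α ∈ Φ) : -α ∈ Φ := by
  rcases hsub hα with ⟨i, j, hij, h | h | h⟩ | ⟨i, h | h⟩ <;> subst h
  · exact refl_mem2 Φ hcl hα hα 2 (by norm_num [hij, Ne.symm hij]) (by norm_num [hij, Ne.symm hij]) (by module)
  · exact refl_mem2 Φ hcl hα hα 2 (by norm_num [hij, Ne.symm hij]) (by norm_num [hij, Ne.symm hij]) (by module)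
  · exact refl_mem2 Φ hcl hα hα 2 (by norm_num [hij, Ne.symm hij]) (by norm_num [hij, Ne.symm hij]) (by module)
  · exact refl_mem4 Φ hcl hα hα 4 (by norm_num) (by norm_num) (by module)
  · exact refl_mem4 Φ hcl hα hα 4 (by norm_num) (by norm_num) (by module)

end Main
section Main2
variable (Φ : Set (Fin n → ℝ)) (hsub : Φ ⊆ Cset n)
  (hcl : ∀ α ∈ Φ, ∀ β ∈ Φ, reflRoot α β ∈ Φ)

def conn (i j : Fin n) : Prop := E i - E j ∈ Φ ∨ E i + E j ∈ Φ
def DP (i j : Fin n) : Prop := E i - E j ∈ Φ ∧ E i + E j ∈ Φ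

include hsub hcl

lemma conn_symm {i j : Fin n} (h : conn Φ i j) : conn Φ j i := by
  rcases h with h | h
  · left
    have : E j - E i = -(E i - E j) := by module
    rw [this]; exact neg_mem Φ hsub hcl h
  · right
    have : E j + E i = E i + E j := by module
    rw [this]; exact h

lemma conn_trans {i j k : Fin n} (hij : i ≠ j) (hjk : j ≠ k) (hik : i ≠ k)
    (h1 : conn Φ i j) (h2 : conn Φ j k) : conn Φ i k := by
  have sij := Ne.symm hij; have sjk := Ne.symm hjk; have sik := Ne.symm hik
  rcases h1 with h1 | h1 <;> rcases h2 with h2 | h2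
  · exact Or.inl (refl_mem2 Φ hcl h2 h1 (-1) (by norm_num [hjk, sjk])
      (by norm_num [hij, sij, hjk, sjk, hik, sik]) (by module))
  · exact Or.inr (refl_mem2 Φ hcl h2 h1 (-1) (by norm_num [hjk, sjk])
      (by norm_num [hij, sij, hjk, sjk, hik, sik]) (by module))
  · exact Or.inr (refl_mem2 Φ hcl h2 h1 1 (by norm_num [hjk, sjk])
      (by norm_num [hij, sij, hjk, sjk, hik, sik]) (by module))
  · exact Or.inl (refl_mem2 Φ hcl h2 h1 1 (by norm_num [hjk, sjk])
      (by norm_num [hij, sij, hjk, sjk, hik, sik]) (by module))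

lemma DP_symm {i j : Fin n} (h : DP Φ i j) : DP Φ j i := by
  constructor
  · have : E j - E i = -(E i - E j) := by module
    rw [this]; exact neg_mem Φ hsub hcl h.1
  · have : E j + E i = E i + E j := by module
    rw [this]; exact h.2

lemma DP_of_long_conn {i j : Fin n} (hij : i ≠ j) (hl : (2:ℝ) • E i ∈ Φ)
    (hc : conn Φ i j) : DP Φ i j := by
  have sij := Ne.symm hij
  rcases hc with h | h
  · refine ⟨h, ?_⟩
    have h2 : -(E i + E j) ∈ Φ := refl_mem4 Φ hcl hl h 2 (by norm_num)
      (by norm_num [hij, sij]) (by module)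
    have := neg_mem Φ hsub hcl h2
    rwa [neg_neg] at this
  · refine ⟨?_, h⟩
    have h2 : -(E i - E j) ∈ Φ := refl_mem4 Φ hcl hl h 2 (by norm_num)
      (by norm_num [hij, sij]) (by module)
    have := neg_mem Φ hsub hcl h2
    rwa [neg_neg] at this

lemma long_spread {i j : Fin n} (hij : i ≠ j) (hl : (2:ℝ) • E i ∈ Φ)
    (hd : E i - E j ∈ Φ) : (2:ℝ) • E j ∈ Φ :=
  refl_mem2 Φ hcl hd hl 2 (by norm_num [hij, Ne.symm hij])
    (by norm_num [hij, Ne.symm hij]) (by module)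

lemma DP_spread {i j k : Fin n} (hij : i ≠ j) (hjk : j ≠ k) (hik : i ≠ k)
    (hD : DP Φ i j) (hc : conn Φ j k) : DP Φ i k ∧ DP Φ j k := by
  have sij := Ne.symm hij; have sjk := Ne.symm hjk; have sik := Ne.symm hik
  obtain ⟨hA1, hA2⟩ := hD
  rcases hc with h | h
  · have g1 : E i - E k ∈ Φ := refl_mem2 Φ hcl hA1 h (-1) (by norm_num [hij, sij])
      (by norm_num [hij, sij, hjk, sjk, hik, sik]) (by module)
    have g2 : -(E i + E k) ∈ Φ := refl_mem2 Φ hcl hA2 h 1 (by norm_num [hij, sij])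
      (by norm_num [hij, sij, hjk, sjk, hik, sik]) (by module)
    have g2' : E i + E k ∈ Φ := by have := neg_mem Φ hsub hcl g2; rwa [neg_neg] at this
    have g3 : E j + E k ∈ Φ := refl_mem2 Φ hcl hA1 g2' 1 (by norm_num [hij, sij])
      (by norm_num [hij, sij, hjk, sjk, hik, sik]) (by module)
    exact ⟨⟨g1, g2'⟩, ⟨h, g3⟩⟩
  · have g1 : E i + E k ∈ Φ := refl_mem2 Φ hcl hA1 h (-1) (by norm_num [hij, sij])
      (by norm_num [hij, sij, hjk, sjk, hik, sik]) (by module)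
    have g2 : -(E i - E k) ∈ Φ := refl_mem2 Φ hcl hA2 h 1 (by norm_num [hij, sij])
      (by norm_num [hij, sij, hjk, sjk, hik, sik]) (by module)
    have g2' : E i - E k ∈ Φ := by have := neg_mem Φ hsub hcl g2; rwa [neg_neg] at this
    have g3 : E j - E k ∈ Φ := refl_mem2 Φ hcl hA1 g2' 1 (by norm_num [hij, sij])
      (by norm_num [hij, sij, hjk, sjk, hik, sik]) (by module)
    exact ⟨⟨g2', g1⟩, ⟨g3, h⟩⟩

end Main2
section Main3
variable (Φ : Set (Fin n → ℝ))

def Rel (i j : Fin n) : Prop := i = j ∨ conn Φ i j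

open Classical in
def blk (i : Fin n) : Finset (Fin n) := Finset.univ.filter (Rel Φ i)

lemma mem_blk {i j : Fin n} : j ∈ blk Φ i ↔ Rel Φ i j := by
  classical simp [blk]

lemma blk_self (i : Fin n) : i ∈ blk Φ i := (mem_blk Φ).2 (Or.inl rfl)

def base (i : Fin n) : Fin n := (blk Φ i).min' ⟨i, blk_self Φ i⟩

lemma base_mem (i : Fin n) : base Φ i ∈ blk Φ i := Finset.min'_mem _ _

open Classical in
def epsv (i : Fin n) : ℝ := if E (base Φ i) - E i ∈ Φ ∨ base Φ i = i then 1 else -1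

lemma eps_or (i : Fin n) : epsv Φ i = 1 ∨ epsv Φ i = -1 := by
  unfold epsv; split_ifs <;> simp

lemma eps_sq (i : Fin n) : epsv Φ i * epsv Φ i = 1 := by
  rcases eps_or Φ i with h | h <;> rw [h] <;> norm_num

lemma eps_base {i : Fin n} (h : base Φ i = i) : epsv Φ i = 1 := by
  unfold epsv; exact if_pos (Or.inr h)

def tA (B : Finset (Fin n)) : RType :=
  open Classical in
  if ∃ i ∈ B, (2:ℝ) • E i ∈ Φ then RType.C
  else if ∃ i ∈ B, ∃ j ∈ B, i ≠ j ∧ DP Φ i j then RType.D else RType.A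

variable (hsub : Φ ⊆ Cset n) (hcl : ∀ α ∈ Φ, ∀ β ∈ Φ, reflRoot α β ∈ Φ)
include hsub hcl

lemma rel_symm {i j : Fin n} (h : Rel Φ i j) : Rel Φ j i := by
  rcases h with rfl | h
  · exact Or.inl rfl
  · exact Or.inr (conn_symm Φ hsub hcl h)

lemma rel_trans {i j k : Fin n} (h1 : Rel Φ i j) (h2 : Rel Φ j k) : Rel Φ i k := by
  rcases h1 with rfl | h1
  · exact h2
  rcases h2 with rfl | h2
  · exact Or.inr h1
  by_cases hij : i = j
  · subst hij; exact Or.inr h2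
  by_cases hjk : j = k
  · subst hjk; exact Or.inr h1
  by_cases hik : i = k
  · exact Or.inl hik
  · exact Or.inr (conn_trans Φ hsub hcl hij hjk hik h1 h2)

lemma blk_eq {i j : Fin n} (h : j ∈ blk Φ i) : blk Φ j = blk Φ i := by
  have hij : Rel Φ i j := (mem_blk Φ).1 h
  ext k
  rw [mem_blk, mem_blk]
  constructor
  · exact fun hk => rel_trans Φ hsub hcl hij hk
  · exact fun hk => rel_trans Φ hsub hcl (rel_symm Φ hsub hcl hij) hk

lemma conn_of_blk {i a b : Fin n} (ha : a ∈ blk Φ i) (hb : b ∈ blk Φ i)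
    (hab : a ≠ b) : conn Φ a b := by
  have h1 : Rel Φ a b := rel_trans Φ hsub hcl
    (rel_symm Φ hsub hcl ((mem_blk Φ).1 ha)) ((mem_blk Φ).1 hb)
  rcases h1 with rfl | h1
  · exact absurd rfl hab
  · exact h1

lemma base_eq {i j : Fin n} (h : j ∈ blk Φ i) : base Φ j = base Φ i := by
  have : blk Φ j = blk Φ i := blk_eq Φ hsub hcl h
  simp only [base, this]

lemma hbase {i : Fin n} (hbi : base Φ i ≠ i) :
    E (base Φ i) - epsv Φ i • E i ∈ Φ := by
  unfold epsv; split_ifs with h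
  · rcases h with h | h
    · rwa [one_smul]
    · exact absurd h hbi
  · push_neg at h
    have hc : conn Φ (base Φ i) i :=
      conn_of_blk Φ hsub hcl (base_mem Φ i) (blk_self Φ i) hbi
    rcases hc with hc | hc
    · exact absurd hc h.1
    · rw [show E (base Φ i) - (-1:ℝ) • E i = E (base Φ i) + E i by module]
      exact hc

end Main3
section Main4
variable (Φ : Set (Fin n → ℝ)) (hsub : Φ ⊆ Cset n)
  (hcl : ∀ α ∈ Φ, ∀ β ∈ Φ, reflRoot α β ∈ Φ)
include hsub hcl

lemma DP_of {p q : Fin n} (s : ℝ) (hs : s = 1 ∨ s = -1)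
    (h1 : E p - s • E q ∈ Φ) (h2 : E p + s • E q ∈ Φ) : DP Φ p q := by
  rcases hs with h | h <;> subst h
  · rw [one_smul] at h1 h2; exact ⟨h1, h2⟩
  · rw [show E p - (-1:ℝ) • E q = E p + E q by module] at h1
    rw [show E p + (-1:ℝ) • E q = E p - E q by module] at h2
    exact ⟨h2, h1⟩

lemma DP_all {i0 p q a b : Fin n} (hp : p ∈ blk Φ i0) (hq : q ∈ blk Φ i0)
    (hpq : p ≠ q) (hD : DP Φ p q) (ha : a ∈ blk Φ i0) (hb : b ∈ blk Φ i0)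
    (hab : a ≠ b) : DP Φ a b := by
  have key : ∀ x ∈ blk Φ i0, x ≠ p → DP Φ p x := by
    intro x hx hxp
    by_cases hxq : x = q
    · subst hxq; exact hD
    · have hc : conn Φ q x := conn_of_blk Φ hsub hcl hq hx (Ne.symm hxq)
      exact (DP_spread Φ hsub hcl hpq (Ne.symm hxq) (Ne.symm hxp) hD hc).1
  by_cases hap : a = p
  · subst hap; exact key b hb (Ne.symm hab)
  by_cases hbp : b = p
  · subst hbp; exact DP_symm Φ hsub hcl (key a ha hap)
  · have hDa : DP Φ p a := key a ha hap
    have hc : conn Φ a b := conn_of_blk Φ hsub hcl ha hb hab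
    exact (DP_spread Φ hsub hcl (Ne.symm hap) hab (Ne.symm hbp) hDa hc).2

lemma Apair_core (s t : ℝ) (hs : s*s = 1) (ht : t*t = 1) {b0 a b : Fin n}
    (h0a : b0 ≠ a) (h0b : b0 ≠ b) (hab : a ≠ b)
    (h1 : E b0 - s • E a ∈ Φ) (h2 : E b0 - t • E b ∈ Φ) :
    s • E a - t • E b ∈ Φ := by
  refine refl_mem2 Φ hcl h1 h2 1 ?_ ?_ (by module)
  · simp [h0a, Ne.symm h0a]; linear_combination hs
  · simp [h0a, Ne.symm h0a, h0b, Ne.symm h0b, hab, Ne.symm hab]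

lemma Apair_core2 (s t : ℝ) (hs : s*s = 1) (ht : t*t = 1) {b0 a b : Fin n}
    (h0a : b0 ≠ a) (h0b : b0 ≠ b) (hab : a ≠ b)
    (h2 : E b0 - t • E b ∈ Φ) (h3 : s • E a + t • E b ∈ Φ) :
    E b0 + s • E a ∈ Φ := by
  refine refl_mem2 Φ hcl h2 h3 (-1) ?_ ?_ (by module)
  · simp [h0b, Ne.symm h0b]; linear_combination ht
  · simp [h0a, Ne.symm h0a, h0b, Ne.symm h0b, hab, Ne.symm hab]
    linear_combination ht

end Main4
section Main5
variable (Φ : Set (Fin n → ℝ)) (hsub : Φ ⊆ Cset n)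
  (hcl : ∀ α ∈ Φ, ∀ β ∈ Φ, reflRoot α β ∈ Φ)
include hsub hcl

lemma Amem {i0 a b : Fin n} (ha : a ∈ blk Φ i0) (hb : b ∈ blk Φ i0) (hab : a ≠ b) :
    epsv Φ a • E a - epsv Φ b • E b ∈ Φ := by
  have hba : base Φ a = base Φ i0 := base_eq Φ hsub hcl ha
  have hbb : base Φ b = base Φ i0 := base_eq Φ hsub hcl hb
  by_cases hA : base Φ i0 = a
  · have hea : epsv Φ a = 1 := eps_base Φ (by rw [hba, hA])
    have h := hbase Φ hsub hcl (i := b) (by rw [hbb, hA]; exact hab)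
    rw [hbb, hA] at h
    rwa [hea, one_smul]
  by_cases hB : base Φ i0 = b
  · have heb : epsv Φ b = 1 := eps_base Φ (by rw [hbb, hB])
    have h := hbase Φ hsub hcl (i := a) (by rw [hba]; exact hA)
    rw [hba] at h
    have h2 := neg_mem Φ hsub hcl h
    rw [heb, one_smul, ← hB,
      show epsv Φ a • E a - E (base Φ i0) = -(E (base Φ i0) - epsv Φ a • E a) by module]
    exact h2
  · have h1 := hbase Φ hsub hcl (i := a) (by rw [hba]; exact hA)
    have h2 := hbase Φ hsub hcl (i := b) (by rw [hbb]; exact hB)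
    rw [hba] at h1; rw [hbb] at h2
    exact Apair_core Φ hsub hcl _ _ (eps_sq Φ a) (eps_sq Φ b) hA hB hab h1 h2

lemma Anotmem {i0 a b : Fin n}
    (hnoD : ¬ ∃ p ∈ blk Φ i0, ∃ q ∈ blk Φ i0, p ≠ q ∧ DP Φ p q)
    (ha : a ∈ blk Φ i0) (hb : b ∈ blk Φ i0) (hab : a ≠ b) :
    epsv Φ a • E a + epsv Φ b • E b ∉ Φ := by
  intro h
  have hba : base Φ a = base Φ i0 := base_eq Φ hsub hcl ha
  have hbb : base Φ b = base Φ i0 := base_eq Φ hsub hcl hb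
  by_cases hA : base Φ i0 = a
  · have hea : epsv Φ a = 1 := eps_base Φ (by rw [hba, hA])
    have h1 := hbase Φ hsub hcl (i := b) (by rw [hbb, hA]; exact hab)
    rw [hbb, hA] at h1
    rw [hea, one_smul] at h
    exact hnoD ⟨a, ha, b, hb, hab, DP_of Φ hsub hcl _ (eps_or Φ b) h1 h⟩
  by_cases hB : base Φ i0 = b
  · have heb : epsv Φ b = 1 := eps_base Φ (by rw [hbb, hB])
    have h1 := hbase Φ hsub hcl (i := a) (by rw [hba]; exact hA)
    rw [hba, hB] at h1
    rw [heb, one_smul] at h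
    have h' : E b + epsv Φ a • E a ∈ Φ := by
      rwa [show epsv Φ a • E a + E b = E b + epsv Φ a • E a by module] at h
    exact hnoD ⟨b, hb, a, ha, Ne.symm hab, DP_of Φ hsub hcl _ (eps_or Φ a) h1 h'⟩
  · have h1 := hbase Φ hsub hcl (i := a) (by rw [hba]; exact hA)
    have h2 := hbase Φ hsub hcl (i := b) (by rw [hbb]; exact hB)
    rw [hba] at h1; rw [hbb] at h2
    have h3 : E (base Φ i0) + epsv Φ a • E a ∈ Φ :=
      Apair_core2 Φ hsub hcl _ _ (eps_sq Φ a) (eps_sq Φ b) hA hB hab h2 h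
    exact hnoD ⟨base Φ i0, base_mem Φ i0, a, ha, hA,
      DP_of Φ hsub hcl _ (eps_or Φ a) h1 h3⟩

end Main5

lemma sgn_mul {s t : ℝ} (hs : s = 1 ∨ s = -1) (ht : t = 1 ∨ t = -1) :
    s * t = 1 ∨ s * t = -1 := by
  rcases hs with rfl | rfl <;> rcases ht with rfl | rfl <;> norm_num

lemma mem_PhiD_st {B : Finset (Fin n)} {i j : Fin n} (hi : i ∈ B) (hj : j ∈ B)
    (hij : i ≠ j) (s t : ℝ) (hs : s = 1 ∨ s = -1) (ht : t = 1 ∨ t = -1) :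
    s • E i + t • E j ∈ PhiD B := by
  rcases hs with rfl | rfl <;> rcases ht with rfl | rfl
  · exact ⟨i, hi, j, hj, hij, Or.inr (Or.inl (by module))⟩
  · exact ⟨i, hi, j, hj, hij, Or.inl (by module)⟩
  · exact ⟨j, hj, i, hi, hij.symm, Or.inl (by module)⟩
  · exact ⟨i, hi, j, hj, hij, Or.inr (Or.inr (by module))⟩

section Main6
variable (Φ : Set (Fin n → ℝ))

def sig (v : Fin n → ℝ) : Fin n → ℝ := fun j => epsv Φ j * v j

lemma sig_comb (a b : ℝ) (p q : Fin n) :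
    sig Φ (a • E p + b • E q) = (epsv Φ p * a) • E p + (epsv Φ q * b) • E q := by
  funext j
  simp only [sig, Pi.add_apply, Pi.smul_apply, smul_eq_mul, E, Pi.single_apply]
  split_ifs <;> subst_vars <;> ring

lemma sig_smulE (a : ℝ) (p : Fin n) : sig Φ (a • E p) = (epsv Φ p * a) • E p := by
  funext j
  simp only [sig, Pi.smul_apply, smul_eq_mul, E, Pi.single_apply]
  split_ifs <;> subst_vars <;> ring

lemma sig_invol (v : Fin n → ℝ) : sig Φ (sig Φ v) = v := by
  funext j
  have := eps_sq Φ j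
  simp only [sig]
  rw [← mul_assoc, this, one_mul]

lemma tA_spec (B : Finset (Fin n)) :
    (tA Φ B = RType.C ∧ ∃ i ∈ B, (2:ℝ) • E i ∈ Φ) ∨
    (tA Φ B = RType.D ∧ ¬(∃ i ∈ B, (2:ℝ) • E i ∈ Φ) ∧
      ∃ p ∈ B, ∃ q ∈ B, p ≠ q ∧ DP Φ p q) ∨
    (tA Φ B = RType.A ∧ ¬(∃ i ∈ B, (2:ℝ) • E i ∈ Φ) ∧
      ¬∃ p ∈ B, ∃ q ∈ B, p ≠ q ∧ DP Φ p q) := by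
  unfold tA
  split_ifs with h1 h2
  · exact Or.inl ⟨rfl, h1⟩
  · exact Or.inr (Or.inl ⟨rfl, h1, h2⟩)
  · exact Or.inr (Or.inr ⟨rfl, h1, h2⟩)

variable (hsub : Φ ⊆ Cset n) (hcl : ∀ α ∈ Φ, ∀ β ∈ Φ, reflRoot α β ∈ Φ)
include hsub hcl

lemma mem_of_DP {i j : Fin n} (hD : DP Φ i j) (s t : ℝ)
    (hs : s = 1 ∨ s = -1) (ht : t = 1 ∨ t = -1) : s • E i + t • E j ∈ Φ := by
  rcases hs with rfl | rfl <;> rcases ht with rfl | rfl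
  · rw [show (1:ℝ) • E i + (1:ℝ) • E j = E i + E j by module]; exact hD.2
  · rw [show (1:ℝ) • E i + (-1:ℝ) • E j = E i - E j by module]; exact hD.1
  · rw [show (-1:ℝ) • E i + (1:ℝ) • E j = -(E i - E j) by module]
    exact neg_mem Φ hsub hcl hD.1
  · rw [show (-1:ℝ) • E i + (-1:ℝ) • E j = -(E i + E j) by module]
    exact neg_mem Φ hsub hcl hD.2

lemma sig_mem_of_DP {p q : Fin n} (hpq : p ≠ q) (hD : DP Φ p q) {v : Fin n → ℝ}
    (hsh : v = E p - E q ∨ v = E p + E q ∨ v = -(E p + E q)) : sig Φ v ∈ Φ := by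
  rcases hsh with rfl | rfl | rfl
  · rw [show E p - E q = (1:ℝ) • E p + (-1:ℝ) • E q by module, sig_comb]
    exact mem_of_DP Φ hsub hcl hD _ _ (sgn_mul (eps_or Φ p) (Or.inl rfl))
      (sgn_mul (eps_or Φ q) (Or.inr rfl))
  · rw [show E p + E q = (1:ℝ) • E p + (1:ℝ) • E q by module, sig_comb]
    exact mem_of_DP Φ hsub hcl hD _ _ (sgn_mul (eps_or Φ p) (Or.inl rfl))
      (sgn_mul (eps_or Φ q) (Or.inl rfl))
  · rw [show -(E p + E q) = (-1:ℝ) • E p + (-1:ℝ) • E q by module, sig_comb]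
    exact mem_of_DP Φ hsub hcl hD _ _ (sgn_mul (eps_or Φ p) (Or.inr rfl))
      (sgn_mul (eps_or Φ q) (Or.inr rfl))

lemma eps_eq_of_sub {i0 a b : Fin n}
    (hnoD : ¬ ∃ p ∈ blk Φ i0, ∃ q ∈ blk Φ i0, p ≠ q ∧ DP Φ p q)
    (ha : a ∈ blk Φ i0) (hb : b ∈ blk Φ i0) (hab : a ≠ b)
    (h : E a - E b ∈ Φ) : epsv Φ a = epsv Φ b := by
  have key := Anotmem Φ hsub hcl hnoD ha hb hab
  rcases eps_or Φ a with ea | ea <;> rcases eps_or Φ b with eb | eb <;>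
    rw [ea, eb] <;> try rfl
  · exfalso; apply key; rw [ea, eb]
    rw [show (1:ℝ) • E a + (-1:ℝ) • E b = E a - E b by module]; exact h
  · exfalso; apply key; rw [ea, eb]
    rw [show (-1:ℝ) • E a + (1:ℝ) • E b = -(E a - E b) by module]
    exact neg_mem Φ hsub hcl h

lemma eps_ne_of_add {i0 a b : Fin n}
    (hnoD : ¬ ∃ p ∈ blk Φ i0, ∃ q ∈ blk Φ i0, p ≠ q ∧ DP Φ p q)
    (ha : a ∈ blk Φ i0) (hb : b ∈ blk Φ i0) (hab : a ≠ b)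
    (h : E a + E b ∈ Φ) : epsv Φ a = - epsv Φ b := by
  have key := Anotmem Φ hsub hcl hnoD ha hb hab
  rcases eps_or Φ a with ea | ea <;> rcases eps_or Φ b with eb | eb <;>
    rw [ea, eb] <;> try norm_num
  · exfalso; apply key; rw [ea, eb]
    rw [show (1:ℝ) • E a + (1:ℝ) • E b = E a + E b by module]; exact h
  · exfalso; apply key; rw [ea, eb]
    rw [show (-1:ℝ) • E a + (-1:ℝ) • E b = -(E a + E b) by module]
    exact neg_mem Φ hsub hcl h

end Main6
end S12

open S12 in
/-- Classification of root subsystems (Corollary 4.5). -/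
theorem stmt12 (n : ℕ) (hn : 1 ≤ n) (Φ : Set (Fin n → ℝ)) (hsub : Φ ⊆ Cset n)
    (hcl : ∀ α ∈ Φ, ∀ β ∈ Φ, reflRoot α β ∈ Φ) :
    ∃ (ε : Fin n → ℝ) (blk : Fin n → Finset (Fin n)) (t : Finset (Fin n) → RType),
      (∀ i, ε i = 1 ∨ ε i = -1) ∧
      (∀ i, i ∈ blk i) ∧ (∀ i j, j ∈ blk i → blk j = blk i) ∧
      (∀ i, t (blk i) = RType.A ∨ t (blk i) = RType.D ∨ t (blk i) = RType.C) ∧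
      (fun v : Fin n → ℝ => fun j => ε j * v j) '' Φ =
        ⋃ i, PhiOf (t (blk i)) (blk i) := by
  refine ⟨epsv Φ, blk Φ, tA Φ, eps_or Φ, blk_self Φ,
    fun i j hj => blk_eq Φ hsub hcl hj, ?_, ?_⟩
  · intro i
    rcases tA_spec Φ (blk Φ i) with ⟨h, -⟩ | ⟨h, -⟩ | ⟨h, -⟩
    · exact Or.inr (Or.inr h)
    · exact Or.inr (Or.inl h)
    · exact Or.inl h
  apply Set.ext; intro v
  constructor
  · rintro ⟨α, hα, rfl⟩
    show sig Φ α ∈ _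
    rw [Set.mem_iUnion]
    rcases hsub hα with ⟨i, j, hij, hsh⟩ | ⟨i, hsh⟩
    · -- short root on {i, j}
      have hconn : conn Φ i j := by
        rcases hsh with rfl | rfl | rfl
        · exact Or.inl hα
        · exact Or.inr hα
        · have := neg_mem Φ hsub hcl hα; rw [neg_neg] at this; exact Or.inr this
      have hjblk : j ∈ blk Φ i := (mem_blk Φ).2 (Or.inr hconn)
      refine ⟨i, ?_⟩
      have hD_mem : sig Φ α ∈ PhiD (blk Φ i) := by
        rcases hsh with rfl | rfl | rfl
        · rw [show E i - E j = (1:ℝ) • E i + (-1:ℝ) • E j by module, sig_comb]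
          exact mem_PhiD_st (blk_self Φ i) hjblk hij _ _
            (sgn_mul (eps_or Φ i) (Or.inl rfl)) (sgn_mul (eps_or Φ j) (Or.inr rfl))
        · rw [show E i + E j = (1:ℝ) • E i + (1:ℝ) • E j by module, sig_comb]
          exact mem_PhiD_st (blk_self Φ i) hjblk hij _ _
            (sgn_mul (eps_or Φ i) (Or.inl rfl)) (sgn_mul (eps_or Φ j) (Or.inl rfl))
        · rw [show -(E i + E j) = (-1:ℝ) • E i + (-1:ℝ) • E j by module, sig_comb]
          exact mem_PhiD_st (blk_self Φ i) hjblk hij _ _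
            (sgn_mul (eps_or Φ i) (Or.inr rfl)) (sgn_mul (eps_or Φ j) (Or.inr rfl))
      rcases tA_spec Φ (blk Φ i) with ⟨ht, -⟩ | ⟨ht, -, -⟩ | ⟨ht, hnol, hnoD⟩ <;> rw [ht]
      · exact Set.mem_union_left _ hD_mem
      · exact hD_mem
      · -- type A block
        rcases hsh with rfl | rfl | rfl
        · have he : epsv Φ i = epsv Φ j :=
            eps_eq_of_sub Φ hsub hcl hnoD (blk_self Φ i) hjblk hij hα
          rw [show E i - E j = (1:ℝ) • E i + (-1:ℝ) • E j by module, sig_comb, he]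
          rcases eps_or Φ j with ej | ej <;> rw [ej]
          · exact ⟨i, blk_self Φ i, j, hjblk, hij, by module⟩
          · exact ⟨j, hjblk, i, blk_self Φ i, hij.symm, by module⟩
        · have he : epsv Φ i = - epsv Φ j :=
            eps_ne_of_add Φ hsub hcl hnoD (blk_self Φ i) hjblk hij hα
          rw [show E i + E j = (1:ℝ) • E i + (1:ℝ) • E j by module, sig_comb, he]
          rcases eps_or Φ j with ej | ej <;> rw [ej]
          · exact ⟨j, hjblk, i, blk_self Φ i, hij.symm, by module⟩
          · exact ⟨i, blk_self Φ i, j, hjblk, hij, by module⟩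
        · have hα' : E i + E j ∈ Φ := by
            have := neg_mem Φ hsub hcl hα; rwa [neg_neg] at this
          have he : epsv Φ i = - epsv Φ j :=
            eps_ne_of_add Φ hsub hcl hnoD (blk_self Φ i) hjblk hij hα'
          rw [show -(E i + E j) = (-1:ℝ) • E i + (-1:ℝ) • E j by module, sig_comb, he]
          rcases eps_or Φ j with ej | ej <;> rw [ej]
          · exact ⟨i, blk_self Φ i, j, hjblk, hij, by module⟩
          · exact ⟨j, hjblk, i, blk_self Φ i, hij.symm, by module⟩
    · -- long root at i
      have hl : (2:ℝ) • E i ∈ Φ := by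
        rcases hsh with rfl | rfl
        · exact hα
        · have := neg_mem Φ hsub hcl hα; rwa [neg_neg] at this
      have htC : tA Φ (blk Φ i) = RType.C := by
        rcases tA_spec Φ (blk Φ i) with ⟨ht, -⟩ | ⟨ht, hnol, -⟩ | ⟨ht, hnol, -⟩
        · exact ht
        · exact absurd ⟨i, blk_self Φ i, hl⟩ hnol
        · exact absurd ⟨i, blk_self Φ i, hl⟩ hnol
      refine ⟨i, ?_⟩
      rw [htC]
      rcases hsh with rfl | rfl
      · rw [sig_smulE]
        rcases eps_or Φ i with ei | ei <;> rw [ei]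
        · exact Or.inr ⟨i, blk_self Φ i, Or.inl (by module)⟩
        · exact Or.inr ⟨i, blk_self Φ i, Or.inr (by module)⟩
      · rw [show -((2:ℝ) • E i) = (-2:ℝ) • E i by module, sig_smulE]
        rcases eps_or Φ i with ei | ei <;> rw [ei]
        · exact Or.inr ⟨i, blk_self Φ i, Or.inr (by module)⟩
        · exact Or.inr ⟨i, blk_self Φ i, Or.inl (by module)⟩
  · intro hv
    rw [Set.mem_iUnion] at hv
    obtain ⟨i, hv⟩ := hv
    suffices hφ : sig Φ v ∈ Φ by exact ⟨sig Φ v, hφ, sig_invol Φ v⟩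
    rcases tA_spec Φ (blk Φ i) with ⟨ht, p0, hp0, hl0⟩ |
      ⟨ht, hnol, p, hp, q, hq, hpq, hDpq⟩ | ⟨ht, hnol, hnoD⟩ <;> rw [ht] at hv
    · -- C block
      have getDP : ∀ a ∈ blk Φ i, ∀ b ∈ blk Φ i, a ≠ b → DP Φ a b := by
        intro a ha b hb hab
        by_cases hpa : p0 = a
        · subst hpa
          exact DP_of_long_conn Φ hsub hcl hab hl0 (conn_of_blk Φ hsub hcl ha hb hab)
        by_cases hpb : p0 = b
        · subst hpb
          exact DP_symm Φ hsub hcl (DP_of_long_conn Φ hsub hcl (Ne.symm hab) hl0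
            (conn_of_blk Φ hsub hcl hb ha (Ne.symm hab)))
        · have h1 : DP Φ p0 a := DP_of_long_conn Φ hsub hcl hpa hl0
            (conn_of_blk Φ hsub hcl hp0 ha hpa)
          exact (DP_spread Φ hsub hcl hpa hab hpb h1
            (conn_of_blk Φ hsub hcl ha hb hab)).2
      rcases hv with ⟨p, hp, q, hq, hpq, hsh⟩ | ⟨p, hp, hsh⟩
      · exact sig_mem_of_DP Φ hsub hcl hpq (getDP p hp q hq hpq) hsh
      · -- long root
        have hlp : (2:ℝ) • E p ∈ Φ := by
          by_cases hpp : p0 = p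
          · subst hpp; exact hl0
          · exact long_spread Φ hsub hcl hpp hl0 (getDP p0 hp0 p hp hpp).1
        rcases hsh with rfl | rfl
        · rw [sig_smulE]
          rcases eps_or Φ p with ep | ep <;> rw [ep]
          · rw [show ((1:ℝ) * 2) • E p = (2:ℝ) • E p by norm_num]; exact hlp
          · rw [show ((-1:ℝ) * 2) • E p = -((2:ℝ) • E p) by module]
            exact neg_mem Φ hsub hcl hlp
        · rw [show -((2:ℝ) • E p) = (-2:ℝ) • E p by module, sig_smulE]
          rcases eps_or Φ p with ep | ep <;> rw [ep]
          · rw [show ((1:ℝ) * -2) • E p = -((2:ℝ) • E p) by module]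
            exact neg_mem Φ hsub hcl hlp
          · rw [show ((-1:ℝ) * -2) • E p = (2:ℝ) • E p by module]; exact hlp
    · -- D block
      obtain ⟨a, ha, b, hb, hab, hsh⟩ := hv
      exact sig_mem_of_DP Φ hsub hcl hab
        (DP_all Φ hsub hcl hp hq hpq hDpq ha hb hab) hsh
    · -- A block
      obtain ⟨a, ha, b, hb, hab, rfl⟩ := hv
      rw [show E a - E b = (1:ℝ) • E a + (-1:ℝ) • E b by module, sig_comb,
        show (epsv Φ a * 1) • E a + (epsv Φ b * -1) • E b
          = epsv Φ a • E a - epsv Φ b • E b by module]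
      exact Amem Φ hsub hcl ha hb hab
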